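/- For every m ≥ 3, the number of permutations of {1,…,m} that avoid the pattern 321 and have exactly 3 inversions is (m+4)(m−1)(m−3)/6. (These are exactly the permutations of length 3 with planar Bruhat graphs.) -/

import Mathlib

/-- The (Coxeter) length of a permutation: its number of inversions,
i.e. pairs `i < j` with `σ i > σ j`. -/
def invCount {m : ℕ} (σ : Equiv.Perm (Fin m)) : ℕ :=
  (Finset.univ.filter (fun p : Fin m × Fin m => p.1 < p.2 ∧ σ p.2 < σ p.1)).card

/-- `σ` avoids the pattern `321`: there are no indices `i < j < k` with
`σ i > σ j > σ k`. -/
def Avoids321 {m : ℕ} (σ : Equiv.Perm (Fin m)) : Prop :=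
  ¬ ∃ i j k : Fin m, i < j ∧ j < k ∧ σ k < σ j ∧ σ j < σ i

instance {m : ℕ} : DecidablePred (Avoids321 (m := m)) := fun σ => by
  unfold Avoids321; infer_instance

/-!
Every permutation of `Fin (m + 1)` is `permCons p e` for a unique pair: its first entry `p`,
followed by the entries of `e : Perm (Fin m)` shifted past `p`. This adds exactly `p` inversions,
and creates a `321` pattern only from one in `e` or from an inversion of `e` between two values
below `p`. Writing `A m` for the number to be computed and sorting the length-3 permutations of
`Fin (m + 1)` by `p ∈ {0, 1, 2, 3}` gives
`A (m + 1) = A m + mahonian m 2 + (mahonian m 1 - 1) + mahonian m 0`: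
permutations of length at most 2 avoid `321`, and the `- 1` discards `e = (0 1)`, the only
permutation of length 1 whose inversion lies below `2`. The same decomposition gives
`mahonian m 0 = 1`, `mahonian m 1 = m - 1` and `2 * mahonian m 2 = (m + 1) * (m - 2)`, and
induction from `A 3 = 0` yields the formula.
-/

open Finset Equiv

lemma Fin.card_filter_castSucc_lt {m : ℕ} (p : Fin (m + 1)) :
    #{v : Fin m | v.castSucc < p} = p := by
  rw [← Fin.card_Iio, ← filter_gt_eq_Iio, card_filter, card_filter, Fin.sum_univ_castSucc]
  simp [Fin.le_last]

lemma Fin.sum_univ_eq_sum_range_of_eq_zero {M : Type*} [AddCommMonoid M] (f : ℕ → M) {k n : ℕ}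
    (hkn : k ≤ n) (hf : ∀ j, k ≤ j → f j = 0) : ∑ i : Fin n, f i = ∑ j ∈ range k, f j := by
  rw [Fin.sum_univ_eq_sum_range]
  refine (sum_subset (range_subset_range.2 hkn) fun j _ hj => hf j ?_).symm
  simpa using hj

namespace Equiv.Perm

variable {m : ℕ}

def permCons (p : Fin (m + 1)) (e : Perm (Fin m)) : Perm (Fin (m + 1)) :=
  (Fin.cycleRange p).symm * decomposeFin.symm (0, e)

@[simp] lemma permCons_zero (p : Fin (m + 1)) (e : Perm (Fin m)) : permCons p e 0 = p := by
  simp [permCons, Fin.cycleRange_symm_zero]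

@[simp] lemma permCons_succ (p : Fin (m + 1)) (e : Perm (Fin m)) (i : Fin m) :
    permCons p e i.succ = p.succAbove (e i) := by
  simp [permCons, Fin.cycleRange_symm_succ]

lemma permCons_injective :
    Function.Injective fun x : Fin (m + 1) × Perm (Fin m) => permCons x.1 x.2 := by
  rintro ⟨p, e⟩ ⟨q, f⟩ h
  obtain rfl : p = q := by simpa using congr($h 0)
  exact Prod.ext rfl (Equiv.ext fun i => by simpa using congr($h i.succ))

lemma permCons_bijective :
    Function.Bijective fun x : Fin (m + 1) × Perm (Fin m) => permCons x.1 x.2 :=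
  (Fintype.bijective_iff_injective_and_card _).2
    ⟨permCons_injective, by simp [Fintype.card_perm, Nat.factorial_succ]⟩

lemma card_filter_permCons (P : Perm (Fin (m + 1)) → Prop) [DecidablePred P] :
    #{σ | P σ} = ∑ p, #{e : Perm (Fin m) | P (permCons p e)} := by
  simp only [card_filter]
  rw [← Fintype.sum_prod_type']
  exact (Fintype.sum_bijective _ permCons_bijective _ _ fun _ => rfl).symm

def inversions (σ : Perm (Fin m)) : Finset (Fin m × Fin m) := {x | x.1 < x.2 ∧ σ x.2 < σ x.1}

lemma mk_mem_inversions {σ : Perm (Fin m)} {a b : Fin m} :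
    (a, b) ∈ σ.inversions ↔ a < b ∧ σ b < σ a := by
  simp [inversions]

lemma invCount_eq_card_inversions (σ : Perm (Fin m)) : invCount σ = #σ.inversions := rfl

lemma invCount_eq_sum (σ : Perm (Fin m)) :
    invCount σ = ∑ i, ∑ j, if i < j ∧ σ j < σ i then 1 else 0 := by
  rw [invCount, card_filter, ← Fintype.sum_prod_type']

lemma invCount_permCons (p : Fin (m + 1)) (e : Perm (Fin m)) :
    invCount (permCons p e) = p + invCount e := by
  simp only [invCount_eq_sum, Fin.sum_univ_succ, permCons_zero, permCons_succ, Fin.succ_pos,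
    Fin.succ_lt_succ_iff, Fin.succAbove_lt_succAbove_iff, Fin.succAbove_lt_iff_castSucc_lt,
    lt_irrefl, Fin.not_lt_zero]
  simp only [false_and, ite_false, true_and, zero_add, ← card_filter]
  rw [← Fin.card_filter_castSucc_lt p]
  exact congr($(card_equiv e (by simp)) + _)

lemma avoids321_permCons_iff (p : Fin (m + 1)) (e : Perm (Fin m)) :
    Avoids321 (permCons p e) ↔ Avoids321 e ∧ ¬∃ a b, a < b ∧ e b < e a ∧ (e a : ℕ) < p := by
  have castSucc_lt_iff (v : Fin m) : v.castSucc < p ↔ (v : ℕ) < p := Iff.rfl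
  simp only [Avoids321, Fin.exists_fin_succ, permCons_zero, permCons_succ, Fin.succ_pos,
    Fin.succ_lt_succ_iff, Fin.succAbove_lt_succAbove_iff, Fin.succAbove_lt_iff_castSucc_lt,
    castSucc_lt_iff, Fin.not_lt_zero, false_and, and_false, true_and, exists_false, false_or,
    not_or]
  exact and_comm

lemma avoids321_of_invCount_lt_three {σ : Perm (Fin m)} (h : invCount σ < 3) : Avoids321 σ := by
  rintro ⟨i, j, k, hij, hjk, hkj, hji⟩
  rw [invCount_eq_card_inversions] at h
  refine h.not_ge (two_lt_card_iff.2 ⟨(i, j), (i, k), (j, k), ?_, ?_, ?_, ?_, ?_, ?_⟩)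
  all_goals simp_all [mk_mem_inversions, hij.trans hjk, hkj.trans hji, hij.ne, hjk.ne]

end Equiv.Perm

open Equiv.Perm

def mahonian (m k : ℕ) : ℕ := #{σ : Perm (Fin m) | invCount σ = k}

theorem mahonian_succ {m k : ℕ} (hk : k ≤ m) :
    mahonian (m + 1) k = ∑ j ∈ range (k + 1), mahonian m (k - j) := by
  rw [mahonian, card_filter_permCons]
  simp_rw [invCount_permCons]
  rw [Fin.sum_univ_eq_sum_range_of_eq_zero (fun j => #{e : Perm (Fin m) | j + invCount e = k})
    (k := k + 1) (by omega) fun j hj => card_eq_zero.2 (filter_eq_empty_iff.2 fun e _ => by omega)]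
  refine sum_congr rfl fun j hj => congr_arg card (filter_congr fun e _ => ?_)
  have := mem_range.1 hj
  omega

theorem mahonian_zero_right (m : ℕ) : mahonian m 0 = 1 := by
  induction m with
  | zero => decide
  | succ n ih => simpa [mahonian_succ] using ih

theorem mahonian_one_right (m : ℕ) : mahonian m 1 = m - 1 := by
  induction m with
  | zero => decide
  | succ n ih =>
    rcases Nat.eq_zero_or_pos n with rfl | hn
    · decide
    · rw [mahonian_succ hn, sum_range_succ, sum_range_one, ih, mahonian_zero_right]
      omega

theorem two_mul_mahonian_two_right (m : ℕ) : 2 * mahonian m 2 = (m + 1) * (m - 2) := by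
  induction m with
  | zero => decide
  | succ n ih =>
    rcases lt_or_ge n 2 with hn | hn
    · interval_cases n <;> decide
    · rw [mahonian_succ hn, sum_range_succ, sum_range_succ, sum_range_one, Nat.sub_zero,
        mahonian_one_right, mahonian_zero_right]
      zify [show 1 ≤ n by omega, show 2 ≤ n + 1 by omega, hn] at ih ⊢
      linear_combination ih

namespace Equiv.Perm

variable {m : ℕ}

lemma invCount_eq_zero_iff {σ : Perm (Fin m)} : invCount σ = 0 ↔ σ = 1 := by
  obtain ⟨g, hg⟩ := card_eq_one.1 (mahonian_zero_right m)
  have h1 : (1 : Perm (Fin m)) ∈ ({σ | invCount σ = 0} : Finset _) :=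
    mem_filter.2 ⟨mem_univ _, card_eq_zero.2 <| filter_eq_empty_iff.2 fun _ _ h => lt_asymm h.1 h.2⟩
  rw [hg, mem_singleton] at h1
  simpa [h1] using Finset.ext_iff.1 hg σ

lemma invCount_eq_one_and_exists_inversion_lt_two_iff {n : ℕ} (e : Perm (Fin (n + 2))) :
    (invCount e = 1 ∧ ∃ a b, a < b ∧ e b < e a ∧ (e a : ℕ) < 2) ↔ e = permCons 1 1 := by
  constructor
  · rintro ⟨h1, a, b, hab, hba, ha⟩
    have heb : e b = 0 := Fin.ext (by rw [Fin.lt_def] at hba; rw [Fin.val_zero]; omega)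
    have ha0 : a = 0 := by
      by_contra ha0
      have h0 : 0 < b := (Fin.pos_of_ne_zero ha0).trans hab
      have h0b : (0, b) ∈ e.inversions := mk_mem_inversions.2 ⟨h0, by
        rw [heb]; exact Fin.pos_of_ne_zero fun h => h0.ne (e.injective (h.trans heb.symm))⟩
      have : 1 < invCount e :=
        one_lt_card.2 ⟨_, h0b, _, mk_mem_inversions.2 ⟨hab, hba⟩, by simp [Ne.symm ha0]⟩
      omega
    obtain ⟨⟨p, f⟩, rfl⟩ := permCons_bijective.2 e
    subst ha0
    simp only [permCons_zero] at ha hba h1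
    obtain rfl : p = 1 := Fin.ext (by have := Fin.lt_def.1 hba; rw [Fin.val_one]; omega)
    rw [invCount_permCons, Fin.val_one, add_eq_left, invCount_eq_zero_iff] at h1
    rw [h1]
  · rintro rfl
    refine ⟨by simp [invCount_permCons, invCount_eq_zero_iff], 0, 1, ?_, ?_, ?_⟩
    · simp
    · rw [← Fin.succ_zero_eq_one, permCons_succ, permCons_zero]
      simp
    · simp

lemma card_invCount_eq_one_and_not_exists_inversion_lt_two_add_one (n : ℕ) :
    #{e : Perm (Fin (n + 2)) | invCount e = 1 ∧ ¬∃ a b, a < b ∧ e b < e a ∧ (e a : ℕ) < 2} + 1 =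
      mahonian (n + 2) 1 := by
  rw [mahonian, ← card_filter_add_card_filter_not (s := {e | invCount e = 1})
    (fun e => ∃ a b, a < b ∧ e b < e a ∧ (e a : ℕ) < 2), filter_filter, filter_filter, add_comm,
    filter_congr fun e _ => invCount_eq_one_and_exists_inversion_lt_two_iff e,
    filter_eq', if_pos (mem_univ _), card_singleton]

end Equiv.Perm

theorem card_avoids321_invCount_three_succ {m : ℕ} (hm : 3 ≤ m) :
    #{σ : Perm (Fin (m + 1)) | Avoids321 σ ∧ invCount σ = 3} =
      #{σ : Perm (Fin m) | Avoids321 σ ∧ invCount σ = 3} + mahonian m 2 + mahonian m 1 := by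
  obtain ⟨n, rfl⟩ : ∃ n, m = n + 2 := ⟨m - 2, by omega⟩
  rw [card_filter_permCons]
  simp_rw [avoids321_permCons_iff, invCount_permCons]
  rw [Fin.sum_univ_eq_sum_range_of_eq_zero (k := 4) (fun j => #{e : Perm (Fin (n + 2)) |
      (Avoids321 e ∧ ¬∃ a b, a < b ∧ e b < e a ∧ (e a : ℕ) < j) ∧ j + invCount e = 3})
    (by omega) fun j hj => card_eq_zero.2 (filter_eq_empty_iff.2 fun e _ => by omega)]
  simp only [sum_range_succ, sum_range_zero, zero_add]
  have first_entry_zero : #{e : Perm (Fin (n + 2)) |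
      (Avoids321 e ∧ ¬∃ a b, a < b ∧ e b < e a ∧ (e a : ℕ) < 0) ∧ invCount e = 3} =
      #{σ : Perm (Fin (n + 2)) | Avoids321 σ ∧ invCount σ = 3} := by
    simp only [Nat.not_lt_zero, and_false, exists_false, not_false_eq_true, and_true]
  have first_entry_one : #{e : Perm (Fin (n + 2)) |
      (Avoids321 e ∧ ¬∃ a b, a < b ∧ e b < e a ∧ (e a : ℕ) < 1) ∧ 1 + invCount e = 3} =
      mahonian (n + 2) 2 := by
    refine congr_arg card (filter_congr fun e _ => ⟨fun h => by omega, fun h => ?_⟩)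
    refine ⟨⟨avoids321_of_invCount_lt_three (by omega), ?_⟩, by omega⟩
    rintro ⟨a, b, -, hba, ha⟩
    rw [Fin.lt_def] at hba
    omega
  have first_entry_two : #{e : Perm (Fin (n + 2)) |
      (Avoids321 e ∧ ¬∃ a b, a < b ∧ e b < e a ∧ (e a : ℕ) < 2) ∧ 2 + invCount e = 3} + 1 =
      mahonian (n + 2) 1 := by
    rw [← card_invCount_eq_one_and_not_exists_inversion_lt_two_add_one]
    refine congr_arg (card · + 1)
      (filter_congr fun e _ => ⟨fun h => ⟨by omega, h.1.2⟩, fun h => ?_⟩)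
    exact ⟨⟨avoids321_of_invCount_lt_three (by omega), h.2⟩, by omega⟩
  have first_entry_three : #{e : Perm (Fin (n + 2)) |
      (Avoids321 e ∧ ¬∃ a b, a < b ∧ e b < e a ∧ (e a : ℕ) < 3) ∧ 3 + invCount e = 3} = 1 := by
    rw [← mahonian_zero_right (n + 2)]
    refine congr_arg card (filter_congr fun e _ => ⟨fun h => by omega, fun h => ?_⟩)
    refine ⟨⟨avoids321_of_invCount_lt_three (by omega), ?_⟩, by omega⟩
    rintro ⟨a, b, hab, hba, -⟩
    exact (card_pos.2 ⟨_, mk_mem_inversions.2 ⟨hab, hba⟩⟩).ne' h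
  omega

theorem six_mul_card_avoids321_invCount_three {m : ℕ} (hm : 3 ≤ m) :
    6 * #{σ : Perm (Fin m) | Avoids321 σ ∧ invCount σ = 3} = (m + 4) * (m - 1) * (m - 3) := by
  induction m, hm using Nat.le_induction with
  | base => decide
  | succ n hn ih =>
    have h2 := two_mul_mahonian_two_right n
    rw [card_avoids321_invCount_three_succ hn, mahonian_one_right, Nat.add_sub_cancel]
    zify [show 1 ≤ n by omega, show 2 ≤ n by omega, show 3 ≤ n + 1 by omega, hn] at ih h2 ⊢
    linear_combination ih + 3 * h2

/-- For every `m ≥ 3`, there are `(m+4)(m-1)(m-3)/6` permutations of `{1,…,m}` that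
avoid `321` and have exactly 3 inversions. -/
theorem card_length_three_avoiding_321 {m : ℕ} (hm : 3 ≤ m) :
    (Finset.univ.filter
        (fun σ : Equiv.Perm (Fin m) => Avoids321 σ ∧ invCount σ = 3)).card =
      (m + 4) * (m - 1) * (m - 3) / 6 := by
  rw [← six_mul_card_avoids321_invCount_three hm, Nat.mul_div_cancel_left _ (by norm_num)]
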